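/- arXiv:0910.1818 — 10 statements merged into one kernel-verified Lean document; each statement's English description precedes it below -/
import Mathlib

section
/- Let f, g, h : 𝕎 → 𝕍 be morphisms of 2-term L∞-algebras over a commutative unital ring K. If θ : W₀ → V₁ is a transformation from f to g and σ : W₀ → V₁ is a transformation from g to h, then the K-linear map θ + σ : W₀ → V₁ is a transformation from f to h. -/
/-- A 2-term L∞-algebra `[∂ : V₁ → V₀]` over a commutative unital ring `K`:
a `K`-linear map `d : V₁ →ₗ[K] V₀`, bilinear brackets
`br0 : V₀×V₀ → V₀`, `br01 : V₀×V₁ → V₁`, `br10 : V₁×V₀ → V₁`, and an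
antisymmetric trilinear Jacobiator `jac : V₀×V₀×V₀ → V₁`, satisfying the
axioms of Baez–Crans. -/
structure TwoTermL (K : Type*) [CommRing K] (V₁ V₀ : Type*)
    [AddCommGroup V₁] [Module K V₁] [AddCommGroup V₀] [Module K V₀] where
  d : V₁ →ₗ[K] V₀
  br0 : V₀ →ₗ[K] V₀ →ₗ[K] V₀
  br01 : V₀ →ₗ[K] V₁ →ₗ[K] V₁
  br10 : V₁ →ₗ[K] V₀ →ₗ[K] V₁
  jac : V₀ →ₗ[K] V₀ →ₗ[K] V₀ →ₗ[K] V₁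
  br0_antisymm : ∀ x y : V₀, br0 x y = - br0 y x
  br01_antisymm : ∀ (x : V₀) (h : V₁), br01 x h = - br10 h x
  d_br01 : ∀ (x : V₀) (h : V₁), d (br01 x h) = br0 x (d h)
  br01_d : ∀ h k : V₁, br01 (d h) k = br10 h (d k)
  jac_swap₁ : ∀ x y z : V₀, jac x y z = - jac y x z
  jac_swap₂ : ∀ x y z : V₀, jac x y z = - jac x z y
  d_jac : ∀ x y z : V₀,
    d (jac x y z) = br0 x (br0 y z) + br0 y (br0 z x) + br0 z (br0 x y)
  jac_d : ∀ (x y : V₀) (h : V₁),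
    jac x y (d h) = br01 x (br01 y h) + br01 y (br10 h x) + br10 h (br0 x y)
  coherence : ∀ w x y z : V₀,
    br10 (jac x y z) w - br10 (jac w x y) z + br10 (jac z w x) y
        - br10 (jac y z w) x
      = jac (br0 x y) z w + jac (br0 z w) x y + jac (br0 x z) w y
        + jac (br0 w y) x z + jac (br0 x w) y z + jac (br0 y z) x w

variable {K : Type*} [CommRing K]
variable {W₁ W₀ V₁ V₀ U₁ U₀ : Type*}
  [AddCommGroup W₁] [Module K W₁] [AddCommGroup W₀] [Module K W₀]
  [AddCommGroup V₁] [Module K V₁] [AddCommGroup V₀] [Module K V₀]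
  [AddCommGroup U₁] [Module K U₁] [AddCommGroup U₀] [Module K U₀]

/-- A (weak) morphism `f = (f₀, f₁, ε)` of 2-term L∞-algebras. -/
structure TwoTermMor (TW : TwoTermL K W₁ W₀) (TV : TwoTermL K V₁ V₀) where
  f₀ : W₀ →ₗ[K] V₀
  f₁ : W₁ →ₗ[K] V₁
  ε : W₀ →ₗ[K] W₀ →ₗ[K] V₁
  ε_antisymm : ∀ x y : W₀, ε x y = - ε y x
  compat_d : ∀ h : W₁, TV.d (f₁ h) = f₀ (TW.d h)
  compat_br0 : ∀ x y : W₀,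
    TV.br0 (f₀ x) (f₀ y) - f₀ (TW.br0 x y) = TV.d (ε x y)
  compat_br01 : ∀ (x : W₀) (k : W₁),
    TV.br01 (f₀ x) (f₁ k) - f₁ (TW.br01 x k) = ε x (TW.d k)
  compat_jac : ∀ x y z : W₀,
    TV.jac (f₀ x) (f₀ y) (f₀ z) - f₁ (TW.jac x y z)
      = ε x (TW.br0 y z) + ε y (TW.br0 z x) + ε z (TW.br0 x y)
        + TV.br01 (f₀ x) (ε y z) + TV.br01 (f₀ y) (ε z x)
        + TV.br01 (f₀ z) (ε x y)

/-- A transformation (L∞-homotopy) from the morphism `a` to the morphism `b`: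
a `K`-linear map `θ : W₀ → V₁` with `b₀ - a₀ = ∂∘θ`, `b₁ - a₁ = θ∘∂`, and
`[θx,θy] - θ[x,y] = ε_b(x,y) - ε_a(x,y) + [a₀y,θx] + [θy,a₀x]`,
where `[θx,θy] := [∂θx,θy]`. -/
def IsTransformation {TW : TwoTermL K W₁ W₀} {TV : TwoTermL K V₁ V₀}
    (a b : TwoTermMor TW TV) (θ : W₀ →ₗ[K] V₁) : Prop :=
  (∀ x : W₀, b.f₀ x - a.f₀ x = TV.d (θ x)) ∧
  (∀ h : W₁, b.f₁ h - a.f₁ h = θ (TW.d h)) ∧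
  (∀ x y : W₀,
    TV.br01 (TV.d (θ x)) (θ y) - θ (TW.br0 x y)
      = b.ε x y - a.ε x y + TV.br01 (a.f₀ y) (θ x) + TV.br10 (θ y) (a.f₀ x))

/-- A butterfly `B : 𝕎 → 𝕍` between 2-term L∞-algebras: a `K`-module `E` with
an antisymmetric bracket and linear maps `κ, ι, σ, ρ` such that both diagonals
are complexes, the NE–SW sequence `0 → V₁ → E → W₀ → 0` is short exact, and the
bracket compatibility axioms hold. -/
structure Butterfly (TW : TwoTermL K W₁ W₀) (TV : TwoTermL K V₁ V₀)
    (E : Type*) [AddCommGroup E] [Module K E] where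
  br : E →ₗ[K] E →ₗ[K] E
  br_antisymm : ∀ a b : E, br a b = - br b a
  κ : W₁ →ₗ[K] E
  ι : V₁ →ₗ[K] E
  σ : E →ₗ[K] W₀
  ρ : E →ₗ[K] V₀
  σ_κ : ∀ l : W₁, σ (κ l) = TW.d l
  ρ_ι : ∀ k : V₁, ρ (ι k) = TV.d k
  ρ_κ : ∀ l : W₁, ρ (κ l) = 0
  σ_ι : ∀ k : V₁, σ (ι k) = 0
  ι_inj : Function.Injective ι
  ker_σ_eq_range_ι : LinearMap.ker σ = LinearMap.range ι
  σ_surj : Function.Surjective σ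
  ρ_br : ∀ a b : E, ρ (br a b) = TV.br0 (ρ a) (ρ b)
  σ_br : ∀ a b : E, σ (br a b) = TW.br0 (σ a) (σ b)
  br_ι : ∀ (a : E) (h : V₁), br a (ι h) = ι (TV.br01 (ρ a) h)
  br_κ : ∀ (a : E) (l : W₁), br a (κ l) = κ (TW.br01 (σ a) l)
  jacobi : ∀ a b c : E,
    ι (TV.jac (ρ a) (ρ b) (ρ c)) + κ (TW.jac (σ a) (σ b) (σ c))
      = br a (br b c) + br b (br c a) + br c (br a b)

/-!
The differentials and the chain maps telescope. In the bracket condition for `θ + τ`, the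
terms not accounted for by the conditions for `θ` and `τ` are the cross terms
`[∂θx, τy] + [∂τx, θy]`, and the discrepancy `[∂θy, τx] + [τy, ∂θx]` caused by `τ` starting
at `g₀ = f₀ + ∂θ` instead of `f₀`. They cancel because `[∂h, k] = -[∂k, h]` on `V₁`.
-/

namespace TwoTermL

variable (T : TwoTermL K V₁ V₀)

theorem br01_d_comm (h k : V₁) : T.br01 (T.d h) k = - T.br01 (T.d k) h := by
  rw [T.br01_d, T.br01_antisymm, neg_neg]

end TwoTermL

theorem IsTransformation.f₀_eq {TW : TwoTermL K W₁ W₀} {TV : TwoTermL K V₁ V₀}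
    {a b : TwoTermMor TW TV} {θ : W₀ →ₗ[K] V₁} (hθ : IsTransformation a b θ) (x : W₀) :
    b.f₀ x = a.f₀ x + TV.d (θ x) :=
  eq_add_of_sub_eq' (hθ.1 x)

/-- Composition of transformations: if `θ` is a transformation from `f` to `g`
and `τ` is a transformation from `g` to `h`, then `θ + τ` is a transformation
from `f` to `h`. -/
theorem transformation_composition
    {TW : TwoTermL K W₁ W₀} {TV : TwoTermL K V₁ V₀}
    (f g h : TwoTermMor TW TV) (θ τ : W₀ →ₗ[K] V₁)
    (hθ : IsTransformation f g θ) (hτ : IsTransformation g h τ) :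
    IsTransformation f h (θ + τ) := by
  refine ⟨fun x => ?_, fun k => ?_, fun x y => ?_⟩
  · rw [LinearMap.add_apply, map_add, ← hθ.1, ← hτ.1, sub_add_sub_cancel']
  · rw [LinearMap.add_apply, ← hθ.2.1, ← hτ.2.1, sub_add_sub_cancel']
  · have hτ_br := hτ.2.2 x y
    rw [hθ.f₀_eq, hθ.f₀_eq] at hτ_br
    have cross₁ := TV.br01_d_comm (τ x) (θ y)
    have cross₂ := TV.br01_antisymm (TV.d (θ x)) (τ y)
    simp only [LinearMap.add_apply, map_add] at hτ_br ⊢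
    linear_combination (norm := abel) hθ.2.2 x y + hτ_br + cross₁ + cross₂
end

section
/- Let B = (E, [·,·], κ, ι, σ, ρ) be a butterfly from 𝕎 to 𝕍 between 2-term L∞-algebras over a commutative unital ring K, and let s : W₀ → E be a K-linear section of σ (σ∘s = id). Define f₀ := ρ∘s; let f₁ : W₁ → V₁ be the unique K-linear map with ι∘f₁ = s∘∂_W − κ (well-defined since σ∘(s∘∂_W − κ) = 0 and ι is injective with image ker σ); and let ε : W₀×W₀ → V₁ be the unique map with ι(ε(x,y)) = [s(x), s(y)] − s([x,y]) for all x,y ∈ W₀ (well-defined for the same reason). Then (f₀, f₁, ε) is a morphism of 2-term L∞-algebras from 𝕎 to 𝕍. -/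
variable {K : Type*} [CommRing K]
variable {W₁ W₀ V₁ V₀ U₁ U₀ : Type*}
  [AddCommGroup W₁] [Module K W₁] [AddCommGroup W₀] [Module K W₀]
  [AddCommGroup V₁] [Module K V₁] [AddCommGroup V₀] [Module K V₀]
  [AddCommGroup U₁] [Module K U₁] [AddCommGroup U₀] [Module K U₀]

/-!
A section `s` of `σ` splits the short exact sequence `0 → V₁ → E → W₀ → 0`, so every element
of `ker σ` is `ι` of a unique element of `V₁`. The failures of `s` to commute with `∂` and with
the brackets lie in `ker σ`, which defines `f₁` and `ε`. Each axiom of a morphism is checked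
after applying the injective map `ι`, where it becomes an identity in `E` that follows from
the butterfly axioms; for the Jacobiator, the point is that the Jacobi sum of `s x, s y, s z`
in `E` is `ι ⟨ρ s x, ρ s y, ρ s z⟩ + κ ⟨x, y, z⟩`.
-/

namespace Function.Exact

variable {R M N P : Type*} [Ring R] [AddCommGroup M] [AddCommGroup N] [AddCommGroup P]
  [Module R M] [Module R N] [Module R P] {f : M →ₗ[R] N} {g : N →ₗ[R] P}

noncomputable def retractionOfSection (h : Function.Exact f g) (hf : Function.Injective f)
    (l : P →ₗ[R] N) (hl : ∀ x, g (l x) = x) : N →ₗ[R] M :=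
  (LinearEquiv.ofInjective f hf).symm ∘ₗ
    (LinearMap.id - l ∘ₗ g).codRestrict (LinearMap.range f)
      (fun y => (h _).mp (by simp [hl]))

theorem apply_retractionOfSection (h : Function.Exact f g) (hf : Function.Injective f)
    (l : P →ₗ[R] N) (hl : ∀ x, g (l x) = x) (y : N) :
    f (h.retractionOfSection hf l hl y) = y - l (g y) := by
  simp only [retractionOfSection, LinearMap.comp_apply, LinearEquiv.coe_coe,
    LinearEquiv.ofInjective_symm_apply]
  rfl

end Function.Exact

namespace Butterfly

variable {TW : TwoTermL K W₁ W₀} {TV : TwoTermL K V₁ V₀} {E : Type*}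
  [AddCommGroup E] [Module K E] (B : Butterfly TW TV E)

theorem exact_ι_σ : Function.Exact B.ι B.σ :=
  LinearMap.exact_iff.mpr B.ker_σ_eq_range_ι

variable {s : W₀ →ₗ[K] E} (hs : ∀ x : W₀, B.σ (s x) = x)

noncomputable def retraction : E →ₗ[K] V₁ :=
  B.exact_ι_σ.retractionOfSection B.ι_inj s hs

theorem ι_retraction {e : E} (he : B.σ e = 0) : B.ι (B.retraction hs e) = e := by
  simp [retraction, Function.Exact.apply_retractionOfSection, he]

noncomputable def f₁OfSection : W₁ →ₗ[K] V₁ :=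
  B.retraction hs ∘ₗ (s ∘ₗ TW.d - B.κ)

theorem ι_f₁OfSection (h : W₁) : B.ι (B.f₁OfSection hs h) = s (TW.d h) - B.κ h :=
  B.ι_retraction hs (by simp [hs, B.σ_κ])

noncomputable def εOfSection : W₀ →ₗ[K] W₀ →ₗ[K] V₁ :=
  (B.br.compl₁₂ s s - TW.br0.compr₂ s).compr₂ (B.retraction hs)

theorem ι_εOfSection (x y : W₀) :
    B.ι (B.εOfSection hs x y) = B.br (s x) (s y) - s (TW.br0 x y) :=
  B.ι_retraction hs (by simp [hs, B.σ_br])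

theorem εOfSection_antisymm (x y : W₀) : B.εOfSection hs x y = - B.εOfSection hs y x :=
  B.ι_inj <| by
    rw [map_neg, B.ι_εOfSection, B.ι_εOfSection, B.br_antisymm (s x), TW.br0_antisymm x y,
      map_neg]
    abel

theorem d_f₁OfSection (h : W₁) : TV.d (B.f₁OfSection hs h) = B.ρ (s (TW.d h)) := by
  rw [← B.ρ_ι, B.ι_f₁OfSection, map_sub, B.ρ_κ, sub_zero]

theorem br0_sub_d_εOfSection (x y : W₀) :
    TV.br0 (B.ρ (s x)) (B.ρ (s y)) - B.ρ (s (TW.br0 x y)) = TV.d (B.εOfSection hs x y) := by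
  rw [← B.ρ_ι, B.ι_εOfSection, map_sub, B.ρ_br]

theorem br01_f₁OfSection (x : W₀) (k : W₁) :
    TV.br01 (B.ρ (s x)) (B.f₁OfSection hs k) - B.f₁OfSection hs (TW.br01 x k)
      = B.εOfSection hs x (TW.d k) :=
  B.ι_inj <| by
    rw [map_sub, ← B.br_ι, B.ι_f₁OfSection, B.ι_f₁OfSection, B.ι_εOfSection, map_sub,
      B.br_κ, hs, TW.d_br01]
    abel

theorem jac_sub_f₁OfSection_jac (x y z : W₀) :
    TV.jac (B.ρ (s x)) (B.ρ (s y)) (B.ρ (s z)) - B.f₁OfSection hs (TW.jac x y z)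
      = B.εOfSection hs x (TW.br0 y z) + B.εOfSection hs y (TW.br0 z x)
        + B.εOfSection hs z (TW.br0 x y)
        + TV.br01 (B.ρ (s x)) (B.εOfSection hs y z) + TV.br01 (B.ρ (s y)) (B.εOfSection hs z x)
        + TV.br01 (B.ρ (s z)) (B.εOfSection hs x y) := by
  have jacobi_s : B.ι (TV.jac (B.ρ (s x)) (B.ρ (s y)) (B.ρ (s z)))
      = B.br (s x) (B.br (s y) (s z)) + B.br (s y) (B.br (s z) (s x))
        + B.br (s z) (B.br (s x) (s y)) - B.κ (TW.jac x y z) := by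
    rw [← B.jacobi, hs, hs, hs, add_sub_cancel_right]
  apply B.ι_inj
  simp only [map_add, map_sub, ← B.br_ι]
  rw [jacobi_s, B.ι_f₁OfSection, TW.d_jac]
  simp only [B.ι_εOfSection, map_add, map_sub]
  abel

noncomputable def morphismOfSection : TwoTermMor TW TV where
  f₀ := B.ρ ∘ₗ s
  f₁ := B.f₁OfSection hs
  ε := B.εOfSection hs
  ε_antisymm := B.εOfSection_antisymm hs
  compat_d := B.d_f₁OfSection hs
  compat_br0 := B.br0_sub_d_εOfSection hs
  compat_br01 := B.br01_f₁OfSection hs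
  compat_jac := B.jac_sub_f₁OfSection_jac hs

end Butterfly

/-- Given a butterfly `B : 𝕎 → 𝕍` and a `K`-linear section `s` of `σ`, the
data `f₀ := ρ∘s`, `f₁` determined by `ι∘f₁ = s∘∂_W − κ`, and `ε` determined by
`ι(ε(x,y)) = [s x, s y] − s [x,y]` is a morphism of 2-term L∞-algebras
from `𝕎` to `𝕍`. -/
theorem butterfly_section_gives_morphism
    {TW : TwoTermL K W₁ W₀} {TV : TwoTermL K V₁ V₀} {E : Type*}
    [AddCommGroup E] [Module K E]
    (B : Butterfly TW TV E) (s : W₀ →ₗ[K] E) (hs : ∀ x : W₀, B.σ (s x) = x) :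
    ∃ m : TwoTermMor TW TV,
      (∀ x : W₀, m.f₀ x = B.ρ (s x)) ∧
      (∀ h : W₁, B.ι (m.f₁ h) = s (TW.d h) - B.κ h) ∧
      (∀ x y : W₀, B.ι (m.ε x y) = B.br (s x) (s y) - s (TW.br0 x y)) :=
  ⟨B.morphismOfSection hs, fun _ => rfl, B.ι_f₁OfSection hs, B.ι_εOfSection hs⟩
end

section
/- Let f = (f₀,f₁,ε) : 𝕎 → 𝕍 be a morphism of 2-term L∞-algebras over a commutative unital ring K, and let B_f be its associated butterfly on E = V₁ ⊕ W₀. Then the section s : W₀ → V₁ ⊕ W₀, s(x) = (0,x), of σ recovers f: namely ρ∘s = f₀; the unique map f₁' with ι∘f₁' = s∘∂_W − κ equals f₁; and the unique map ε' with ι(ε'(x,y)) = [s(x),s(y)] − s([x,y]) equals ε. -/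
variable {K : Type*} [CommRing K]
variable {W₁ W₀ V₁ V₀ U₁ U₀ : Type*}
  [AddCommGroup W₁] [Module K W₁] [AddCommGroup W₀] [Module K W₀]
  [AddCommGroup V₁] [Module K V₁] [AddCommGroup V₀] [Module K V₀]
  [AddCommGroup U₁] [Module K U₁] [AddCommGroup U₀] [Module K U₀]

/-- The bracket of the butterfly `B_f` on `V₁ ⊕ W₀` associated to a morphism `f`. -/
def bfBr {TW : TwoTermL K W₁ W₀} {TV : TwoTermL K V₁ V₀}
    (f : TwoTermMor TW TV) (p q : V₁ × W₀) : V₁ × W₀ :=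
  (TV.br01 (TV.d p.1) q.1 + TV.br01 (f.f₀ p.2) q.1 + TV.br10 p.1 (f.f₀ q.2)
      + f.ε p.2 q.2,
    TW.br0 p.2 q.2)

/-- The map `κ_f : W₁ → V₁ ⊕ W₀`, `κ_f(l) = (−f₁ l, ∂l)`, of the butterfly `B_f`. -/
def bfκ {TW : TwoTermL K W₁ W₀} {TV : TwoTermL K V₁ V₀}
    (f : TwoTermMor TW TV) (l : W₁) : V₁ × W₀ :=
  (-(f.f₁ l), TW.d l)

/-- The map `ι_f : V₁ → V₁ ⊕ W₀`, `ι_f(k) = (k, 0)`, of the butterfly `B_f`. -/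
def bfι (k : V₁) : V₁ × W₀ := (k, 0)

/-- The map `σ_f : V₁ ⊕ W₀ → W₀`, `σ_f(k,x) = x`, of the butterfly `B_f`. -/
def bfσ (p : V₁ × W₀) : W₀ := p.2

/-- The map `ρ_f : V₁ ⊕ W₀ → V₀`, `ρ_f(k,x) = ∂k + f₀x`, of the butterfly `B_f`. -/
def bfρ {TW : TwoTermL K W₁ W₀} {TV : TwoTermL K V₁ V₀}
    (f : TwoTermMor TW TV) (p : V₁ × W₀) : V₀ :=
  TV.d p.1 + f.f₀ p.2

/-- The canonical section `s : W₀ → V₁ ⊕ W₀`, `s(x) = (0,x)`, of `σ_f`. -/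
def bfs (x : W₀) : V₁ × W₀ := ((0 : V₁), x)

section CanonicalSection

variable {TW : TwoTermL K W₁ W₀} {TV : TwoTermL K V₁ V₀} (f : TwoTermMor TW TV)

omit [AddCommGroup V₁] in
theorem bfι_injective : Function.Injective (bfι : V₁ → V₁ × W₀) :=
  fun _ _ h => congrArg Prod.fst h

theorem bfρ_bfs (x : W₀) : bfρ f (bfs x) = f.f₀ x := by
  simp [bfρ, bfs]

theorem bfs_d_sub_bfκ (h : W₁) : bfs (TW.d h) - bfκ f h = bfι (f.f₁ h) := by
  simp [bfs, bfκ, bfι]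

theorem bfBr_bfs_sub_bfs_br0 (x y : W₀) :
    bfBr f (bfs x) (bfs y) - bfs (TW.br0 x y) = bfι (f.ε x y) := by
  simp [bfBr, bfs, bfι]

end CanonicalSection

/-- The section `s(x) = (0,x)` of `σ_f` of the butterfly `B_f` associated to a
morphism `f` recovers `f`: `ρ_f ∘ s = f₀`; the unique `f₁'` with
`ι_f ∘ f₁' = s∘∂_W − κ_f` is `f₁`; and the unique `ε'` with
`ι_f(ε'(x,y)) = [s x, s y] − s [x,y]` is `ε`. -/
theorem canonical_section_recovers_morphism
    {TW : TwoTermL K W₁ W₀} {TV : TwoTermL K V₁ V₀} (f : TwoTermMor TW TV) :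
    (∀ x : W₀, bfρ f (bfs x) = f.f₀ x) ∧
    (∀ h : W₁, bfι (f.f₁ h) = bfs (TW.d h) - bfκ f h) ∧
    (∀ f₁' : W₁ → V₁,
      (∀ h : W₁, bfι (f₁' h) = bfs (TW.d h) - bfκ f h) →
        ∀ h : W₁, f₁' h = f.f₁ h) ∧
    (∀ x y : W₀,
      bfι (f.ε x y) = bfBr f (bfs x) (bfs y) - bfs (TW.br0 x y)) ∧
    (∀ ε' : W₀ → W₀ → V₁,
      (∀ x y : W₀, bfι (ε' x y) = bfBr f (bfs x) (bfs y) - bfs (TW.br0 x y)) →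
        ∀ x y : W₀, ε' x y = f.ε x y) := by
  refine ⟨bfρ_bfs f, fun h => (bfs_d_sub_bfκ f h).symm, ?_,
    fun x y => (bfBr_bfs_sub_bfs_br0 f x y).symm, ?_⟩
  · intro f₁' hf₁' h
    exact bfι_injective ((hf₁' h).trans (bfs_d_sub_bfκ f h))
  · intro ε' hε' x y
    exact bfι_injective ((hε' x y).trans (bfBr_bfs_sub_bfs_br0 f x y))
end

section
/- Let B = (E, [·,·], κ, ι, σ, ρ) be a butterfly from 𝕎 to 𝕍 between 2-term L∞-algebras over a commutative unital ring K, let s : W₀ → E be a K-linear section of σ, and let f = (f₀,f₁,ε) be the induced morphism (f₀ = ρ∘s, ι∘f₁ = s∘∂_W − κ, ι(ε(x,y)) = [s(x),s(y)] − s([x,y])), with associated butterfly B_f on V₁ ⊕ W₀. Then the map Ψ : V₁ ⊕ W₀ → E, Ψ(k,x) := ι(k) + s(x), is an isomorphism of butterflies from B_f to B: Ψ is bijective, preserves brackets, and satisfies Ψ∘κ_f = κ, Ψ∘ι_f = ι, σ∘Ψ = σ_f, ρ∘Ψ = ρ_f. -/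
variable {K : Type*} [CommRing K]
variable {W₁ W₀ V₁ V₀ U₁ U₀ : Type*}
  [AddCommGroup W₁] [Module K W₁] [AddCommGroup W₀] [Module K W₀]
  [AddCommGroup V₁] [Module K V₁] [AddCommGroup V₀] [Module K V₀]
  [AddCommGroup U₁] [Module K U₁] [AddCommGroup U₀] [Module K U₀]

/-! By exactness of `0 → V₁ → E → W₀ → 0`, the splitting `Ψ = ι + s` identifies `E` with
`V₁ ⊕ W₀` as a module, and `f₀ = ρ ∘ s` turns `ρ` into `∂k + f₀x`. The bracket of `E` then
decomposes along `ι` and `s`: brackets with `ι(V₁)` are governed by `[a, ιh] = ι[ρa, h]` and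
antisymmetry, while `[s x, s y] = ι ε(x,y) + s[x,y]` is the defining property of `ε`; the
resulting summands are exactly those of the bracket of `B_f`. -/

theorem LinearMap.bijective_coprod_of_exact {R M N P : Type*} [Semiring R]
    [AddCommGroup M] [AddCommGroup N] [AddCommGroup P]
    [Module R M] [Module R N] [Module R P] {f : M →ₗ[R] N} {g : N →ₗ[R] P}
    (hfg : Function.Exact f g) (hf : Function.Injective f) {s : P →ₗ[R] N}
    (hs : g ∘ₗ s = LinearMap.id) :
    Function.Bijective (f.coprod s) :=
  (hfg.splitSurjectiveEquiv hf ⟨s, hs⟩).1.symm.bijective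

namespace Butterfly

variable {TW : TwoTermL K W₁ W₀} {TV : TwoTermL K V₁ V₀} {E : Type*}
  [AddCommGroup E] [Module K E] (B : Butterfly TW TV E)

theorem br_ι_left (h : V₁) (a : E) : B.br (B.ι h) a = B.ι (TV.br10 h (B.ρ a)) := by
  rw [B.br_antisymm, B.br_ι, TV.br01_antisymm, map_neg, neg_neg]

section Splitting

variable {B} {s : W₀ →ₗ[K] E} {f : TwoTermMor TW TV}

theorem bijective_coprod_of_section (hs : ∀ x : W₀, B.σ (s x) = x) :
    Function.Bijective (B.ι.coprod s) :=
  LinearMap.bijective_coprod_of_exact B.exact_ι_σ B.ι_inj (LinearMap.ext hs)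

theorem σ_coprod (hs : ∀ x : W₀, B.σ (s x) = x) (p : V₁ × W₀) :
    B.σ (B.ι.coprod s p) = bfσ p := by
  rw [LinearMap.coprod_apply, map_add, B.σ_ι, hs, zero_add, bfσ]

theorem ρ_coprod (hf₀ : ∀ x : W₀, f.f₀ x = B.ρ (s x)) (p : V₁ × W₀) :
    B.ρ (B.ι.coprod s p) = bfρ f p := by
  rw [LinearMap.coprod_apply, map_add, B.ρ_ι, ← hf₀, bfρ]

theorem coprod_bfι (k : V₁) : B.ι.coprod s (bfι k) = B.ι k := by
  rw [bfι, LinearMap.coprod_apply, map_zero, add_zero]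

theorem coprod_bfκ (hf₁ : ∀ h : W₁, B.ι (f.f₁ h) = s (TW.d h) - B.κ h) (l : W₁) :
    B.ι.coprod s (bfκ f l) = B.κ l := by
  rw [bfκ, LinearMap.coprod_apply, map_neg, hf₁, neg_sub, sub_add_cancel]

theorem coprod_bfBr (hf₀ : ∀ x : W₀, f.f₀ x = B.ρ (s x))
    (hε : ∀ x y : W₀, B.ι (f.ε x y) = B.br (s x) (s y) - s (TW.br0 x y))
    (p q : V₁ × W₀) :
    B.ι.coprod s (bfBr f p q) = B.br (B.ι.coprod s p) (B.ι.coprod s q) := by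
  obtain ⟨k, x⟩ := p
  obtain ⟨l, y⟩ := q
  have hρ : TV.d k + f.f₀ x = B.ρ (B.ι.coprod s (k, x)) := (ρ_coprod hf₀ (k, x)).symm
  have hss : B.br (s x) (s y) = B.ι (f.ε x y) + s (TW.br0 x y) := by
    rw [hε, sub_add_cancel]
  calc B.ι.coprod s (bfBr f (k, x) (l, y))
      = B.ι (TV.br01 (TV.d k + f.f₀ x) l) + B.ι (TV.br10 k (f.f₀ y))
          + (B.ι (f.ε x y) + s (TW.br0 x y)) := by
        simp only [bfBr, LinearMap.coprod_apply, map_add, LinearMap.add_apply]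
        abel
    _ = B.br (B.ι.coprod s (k, x)) (B.ι l) + B.br (B.ι k) (s y) + B.br (s x) (s y) := by
        rw [hρ, hf₀, ← B.br_ι, ← B.br_ι_left, hss]
    _ = B.br (B.ι.coprod s (k, x)) (B.ι.coprod s (l, y)) := by
        simp only [LinearMap.coprod_apply, map_add, LinearMap.add_apply]
        abel

end Splitting

end Butterfly

/-- Let `B : 𝕎 → 𝕍` be a butterfly, `s` a linear section of `σ`, and
`f = (f₀,f₁,ε)` the induced morphism. Then `Ψ(k,x) := ι(k) + s(x)` is an
isomorphism of butterflies from the associated butterfly `B_f` to `B`: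
it is `K`-linear, bijective, preserves brackets, and commutes with the four
structure maps. -/
theorem associated_butterfly_isomorphic
    {TW : TwoTermL K W₁ W₀} {TV : TwoTermL K V₁ V₀} {E : Type*}
    [AddCommGroup E] [Module K E]
    (B : Butterfly TW TV E) (s : W₀ →ₗ[K] E) (hs : ∀ x : W₀, B.σ (s x) = x)
    (f : TwoTermMor TW TV)
    (hf₀ : ∀ x : W₀, f.f₀ x = B.ρ (s x))
    (hf₁ : ∀ h : W₁, B.ι (f.f₁ h) = s (TW.d h) - B.κ h)
    (hε : ∀ x y : W₀, B.ι (f.ε x y) = B.br (s x) (s y) - s (TW.br0 x y)) :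
    ∀ Ψ : V₁ × W₀ → E, (∀ p : V₁ × W₀, Ψ p = B.ι p.1 + s p.2) →
      IsLinearMap K Ψ ∧
      Function.Bijective Ψ ∧
      (∀ p q : V₁ × W₀, Ψ (bfBr f p q) = B.br (Ψ p) (Ψ q)) ∧
      (∀ l : W₁, Ψ (bfκ f l) = B.κ l) ∧
      (∀ k : V₁, Ψ (bfι k) = B.ι k) ∧
      (∀ p : V₁ × W₀, B.σ (Ψ p) = bfσ p) ∧
      (∀ p : V₁ × W₀, B.ρ (Ψ p) = bfρ f p) := by
  intro Ψ hΨ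
  obtain rfl : Ψ = B.ι.coprod s := funext hΨ
  exact ⟨(B.ι.coprod s).isLinear, Butterfly.bijective_coprod_of_section hs,
    Butterfly.coprod_bfBr hf₀ hε, Butterfly.coprod_bfκ hf₁, Butterfly.coprod_bfι,
    Butterfly.σ_coprod hs, Butterfly.ρ_coprod hf₀⟩
end

section
/- Let f = (f₀,f₁,ε_f) and g = (g₀,g₁,ε_g) be morphisms of 2-term L∞-algebras from 𝕎 to 𝕍 over a commutative unital ring K, and let θ : W₀ → V₁ be a transformation from g to f. Then the map Φ : V₁ ⊕ W₀ → V₁ ⊕ W₀, Φ(k,x) := (k + θ(x), x), is a morphism of butterflies from B_f to B_g: Φ preserves the brackets of B_f and B_g and satisfies Φ∘κ_f = κ_g, Φ∘ι_f = ι_g, σ_g∘Φ = σ_f and ρ_g∘Φ = ρ_f. -/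
variable {K : Type*} [CommRing K]
variable {W₁ W₀ V₁ V₀ U₁ U₀ : Type*}
  [AddCommGroup W₁] [Module K W₁] [AddCommGroup W₀] [Module K W₀]
  [AddCommGroup V₁] [Module K V₁] [AddCommGroup V₀] [Module K V₀]
  [AddCommGroup U₁] [Module K U₁] [AddCommGroup U₀] [Module K U₀]

/-! Writing `Φ = id + ι ∘ θ ∘ σ`, the identities `f₀ = g₀ + ∂θ` and `f₁ = g₁ + θ∂` make `Φ` commute
with `ρ` and `κ`. Expanding `[Φ p, Φ q]_g` bilinearly and comparing with `Φ [p, q]_f`, what is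
left over is exactly the bracket axiom of the transformation. -/

def shear (θ : W₀ →ₗ[K] V₁) : V₁ × W₀ →ₗ[K] V₁ × W₀ :=
  (LinearMap.fst K V₁ W₀ + θ ∘ₗ LinearMap.snd K V₁ W₀).prod (LinearMap.snd K V₁ W₀)

@[simp]
theorem shear_apply (θ : W₀ →ₗ[K] V₁) (p : V₁ × W₀) : shear θ p = (p.1 + θ p.2, p.2) :=
  rfl

section

variable {TW : TwoTermL K W₁ W₀} {TV : TwoTermL K V₁ V₀} {f g : TwoTermMor TW TV}
  {θ : W₀ →ₗ[K] V₁}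

namespace IsTransformation

theorem f₀_apply (hθ : IsTransformation g f θ) (x : W₀) :
    f.f₀ x = g.f₀ x + TV.d (θ x) := by
  rw [← hθ.1 x, add_sub_cancel]

theorem f₁_apply (hθ : IsTransformation g f θ) (h : W₁) :
    f.f₁ h = g.f₁ h + θ (TW.d h) := by
  rw [← hθ.2.1 h, add_sub_cancel]

-- The bracket axiom of a transformation, in the shape in which its terms occur in `B_g`.
theorem θ_br0_add_ε (hθ : IsTransformation g f θ) (x y : W₀) :
    θ (TW.br0 x y) + f.ε x y
      = TV.br01 (TV.d (θ x)) (θ y) + TV.br01 (g.f₀ x) (θ y) + TV.br10 (θ x) (g.f₀ y)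
        + g.ε x y := by
  have hyx := TV.br01_antisymm (g.f₀ y) (θ x)
  have hxy := TV.br01_antisymm (g.f₀ x) (θ y)
  linear_combination (norm := module) -hθ.2.2 x y - hyx - hxy

end IsTransformation

theorem shear_bfBr (hθ : IsTransformation g f θ) (p q : V₁ × W₀) :
    shear θ (bfBr f p q) = bfBr g (shear θ p) (shear θ q) := by
  obtain ⟨k, x⟩ := p
  obtain ⟨l, y⟩ := q
  simp only [shear_apply, bfBr, hθ.f₀_apply, map_add, LinearMap.add_apply, Prod.mk.injEq,
    and_true]
  linear_combination (norm := module) hθ.θ_br0_add_ε x y - TV.br01_d k (θ y)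

theorem shear_bfκ (hθ : IsTransformation g f θ) (l : W₁) : shear θ (bfκ f l) = bfκ g l := by
  simp [bfκ, hθ.f₁_apply]

theorem shear_bfι (k : V₁) : shear θ (bfι k) = bfι k := by
  simp [bfι]

theorem bfσ_shear (p : V₁ × W₀) : bfσ (shear θ p) = bfσ p :=
  rfl

theorem bfρ_shear (hθ : IsTransformation g f θ) (p : V₁ × W₀) :
    bfρ g (shear θ p) = bfρ f p := by
  simp only [bfρ, shear_apply, map_add, hθ.f₀_apply]
  abel

end

/-- A transformation `θ` from `g` to `f` gives a morphism of butterflies from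
`B_f` to `B_g`, namely `Φ(k,x) := (k + θ(x), x)`: it is `K`-linear, preserves
the brackets, and commutes with the four structure maps. -/
theorem transformation_gives_butterfly_morphism
    {TW : TwoTermL K W₁ W₀} {TV : TwoTermL K V₁ V₀}
    (f g : TwoTermMor TW TV) (θ : W₀ →ₗ[K] V₁)
    (hθ : IsTransformation g f θ) :
    ∀ Φ : V₁ × W₀ → V₁ × W₀, (∀ p : V₁ × W₀, Φ p = (p.1 + θ p.2, p.2)) →
      IsLinearMap K Φ ∧
      (∀ p q : V₁ × W₀, Φ (bfBr f p q) = bfBr g (Φ p) (Φ q)) ∧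
      (∀ l : W₁, Φ (bfκ f l) = bfκ g l) ∧
      (∀ k : V₁, Φ (bfι k) = bfι k) ∧
      (∀ p : V₁ × W₀, bfσ (Φ p) = bfσ p) ∧
      (∀ p : V₁ × W₀, bfρ g (Φ p) = bfρ f p) := by
  intro Φ hΦ
  obtain rfl : Φ = shear θ := funext hΦ
  exact ⟨(shear θ).isLinear, shear_bfBr hθ, shear_bfκ hθ, shear_bfι, bfσ_shear, bfρ_shear hθ⟩
end

section
/- Let f = (f₀,f₁,ε_f) and g = (g₀,g₁,ε_g) be morphisms of 2-term L∞-algebras from 𝕎 to 𝕍 over a commutative unital ring K, and let Φ : V₁ ⊕ W₀ → V₁ ⊕ W₀ be a morphism of butterflies from B_f to B_g. Then there is a unique K-linear map θ : W₀ → V₁ such that Φ(k,x) = (k + θ(x), x) for all (k,x) ∈ V₁ ⊕ W₀, and this θ is a transformation from g to f. -/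
variable {K : Type*} [CommRing K]
variable {W₁ W₀ V₁ V₀ U₁ U₀ : Type*}
  [AddCommGroup W₁] [Module K W₁] [AddCommGroup W₀] [Module K W₀]
  [AddCommGroup V₁] [Module K V₁] [AddCommGroup V₀] [Module K V₀]
  [AddCommGroup U₁] [Module K U₁] [AddCommGroup U₀] [Module K U₀]

theorem Prod.apply_mk_eq_add_fst_apply_inr {M N F : Type*} [AddZeroClass M] [AddZeroClass N]
    [FunLike F (M × N) (M × N)] [AddHomClass F (M × N) (M × N)] (Φ : F)
    (hinl : ∀ k : M, Φ (k, 0) = (k, 0)) (hsnd : ∀ p : M × N, (Φ p).2 = p.2)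
    (k : M) (x : N) : Φ (k, x) = (k + (Φ (0, x)).1, x) := by
  have hsplit : ((k, x) : M × N) = (k, 0) + (0, x) := by simp
  rw [hsplit, map_add, hinl]
  exact Prod.ext rfl (by simp [hsnd])

theorem Prod.eq_of_apply_mk_eq_add {M N : Type*} [AddZeroClass M] {Φ : M × N → M × N}
    {θ ψ : N → M} (hθ : ∀ (k : M) (x : N), Φ (k, x) = (k + θ x, x))
    (hψ : ∀ (k : M) (x : N), Φ (k, x) = (k + ψ x, x)) : ψ = θ := by
  funext x
  simpa using congrArg Prod.fst ((hψ 0 x).symm.trans (hθ 0 x))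

section Shear

variable {TW : TwoTermL K W₁ W₀} {TV : TwoTermL K V₁ V₀} {f g : TwoTermMor TW TV}
  {Φ : V₁ × W₀ → V₁ × W₀} {θ : W₀ →ₗ[K] V₁}

theorem f₀_sub_f₀_eq_d_of_bfρ (hΦ : ∀ (k : V₁) (x : W₀), Φ (k, x) = (k + θ x, x))
    (hρ : ∀ p : V₁ × W₀, bfρ g (Φ p) = bfρ f p) (x : W₀) :
    f.f₀ x - g.f₀ x = TV.d (θ x) := by
  have h := hρ (0, x)
  simp only [hΦ, bfρ, zero_add, map_zero] at h
  rw [← h]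
  abel

theorem f₁_sub_f₁_eq_of_bfκ (hΦ : ∀ (k : V₁) (x : W₀), Φ (k, x) = (k + θ x, x))
    (hκ : ∀ l : W₁, Φ (bfκ f l) = bfκ g l) (l : W₁) :
    f.f₁ l - g.f₁ l = θ (TW.d l) := by
  have h := congrArg Prod.fst (hκ l)
  simp only [bfκ, hΦ] at h
  linear_combination (norm := abel) -h

theorem bracket_eq_of_bfBr (hΦ : ∀ (k : V₁) (x : W₀), Φ (k, x) = (k + θ x, x))
    (hbr : ∀ p q : V₁ × W₀, Φ (bfBr f p q) = bfBr g (Φ p) (Φ q)) (x y : W₀) :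
    TV.br01 (TV.d (θ x)) (θ y) - θ (TW.br0 x y)
      = f.ε x y - g.ε x y + TV.br01 (g.f₀ y) (θ x) + TV.br10 (θ y) (g.f₀ x) := by
  have h := congrArg Prod.fst (hbr (0, x) (0, y))
  simp only [bfBr, hΦ, map_zero, LinearMap.zero_apply, zero_add, add_zero] at h
  have hxy := TV.br01_antisymm (g.f₀ x) (θ y)
  have hyx := TV.br01_antisymm (g.f₀ y) (θ x)
  linear_combination (norm := abel) -h - hxy - hyx

theorem isTransformation_of_shear (hΦ : ∀ (k : V₁) (x : W₀), Φ (k, x) = (k + θ x, x))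
    (hbr : ∀ p q : V₁ × W₀, Φ (bfBr f p q) = bfBr g (Φ p) (Φ q))
    (hκ : ∀ l : W₁, Φ (bfκ f l) = bfκ g l)
    (hρ : ∀ p : V₁ × W₀, bfρ g (Φ p) = bfρ f p) :
    IsTransformation g f θ :=
  ⟨f₀_sub_f₀_eq_d_of_bfρ hΦ hρ, f₁_sub_f₁_eq_of_bfκ hΦ hκ, bracket_eq_of_bfBr hΦ hbr⟩

end Shear

/-- Conversely, every morphism of butterflies `Φ : B_f → B_g` is of the form
`Φ(k,x) = (k + θ(x), x)` for a unique `K`-linear `θ : W₀ → V₁`, and any such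
`θ` is a transformation from `g` to `f`. -/
theorem butterfly_morphism_gives_transformation
    {TW : TwoTermL K W₁ W₀} {TV : TwoTermL K V₁ V₀}
    (f g : TwoTermMor TW TV) (Φ : (V₁ × W₀) →ₗ[K] (V₁ × W₀))
    (hbr : ∀ p q : V₁ × W₀, Φ (bfBr f p q) = bfBr g (Φ p) (Φ q))
    (hκ : ∀ l : W₁, Φ (bfκ f l) = bfκ g l)
    (hι : ∀ k : V₁, Φ (bfι k) = bfι k)
    (hσ : ∀ p : V₁ × W₀, bfσ (Φ p) = bfσ p)
    (hρ : ∀ p : V₁ × W₀, bfρ g (Φ p) = bfρ f p) :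
    (∃! θ : W₀ →ₗ[K] V₁, ∀ (k : V₁) (x : W₀), Φ (k, x) = (k + θ x, x)) ∧
    (∀ θ : W₀ →ₗ[K] V₁, (∀ (k : V₁) (x : W₀), Φ (k, x) = (k + θ x, x)) →
      IsTransformation g f θ) := by
  set θ : W₀ →ₗ[K] V₁ := LinearMap.fst K V₁ W₀ ∘ₗ Φ ∘ₗ LinearMap.inr K V₁ W₀
  have hΦθ : ∀ (k : V₁) (x : W₀), Φ (k, x) = (k + θ x, x) :=
    Prod.apply_mk_eq_add_fst_apply_inr Φ hι hσ
  refine ⟨⟨θ, hΦθ, fun ψ hψ => ?_⟩, fun ψ hψ => isTransformation_of_shear hψ hbr hκ hρ⟩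
  exact LinearMap.coe_injective (Prod.eq_of_apply_mk_eq_add hΦθ hψ)
end

section
/- Let B = (E, κ, ι, σ, ρ) : 𝕎 → 𝕍 be a butterfly between 2-term L∞-algebras over a commutative unital ring K. Then: (i) for every l ∈ ker ∂_W ⊆ W₁ there is a unique element H₁(B)(l) ∈ V₁ with ι(H₁(B)(l)) = κ(l), this element lies in ker ∂_V, and H₁(B) : ker ∂_W → ker ∂_V is K-linear; (ii) for x ∈ W₀, choosing any e ∈ E with σ(e) = x, the class of ρ(e) in V₀/∂(V₁) is independent of the choice of e and of the representative of x modulo ∂(W₁), yielding a well-defined K-linear map H₀(B) : W₀/∂(W₁) → V₀/∂(V₁); (iii) the brackets on W₀ and V₀ descend to well-defined brackets on W₀/∂(W₁) and V₀/∂(V₁), and H₀(B) preserves them: H₀(B)([x,y] mod ∂W₁) = [H₀(B)(x mod ∂W₁), H₀(B)(y mod ∂W₁)]; and (iv) H₁(B) is equivariant over H₀(B): for x ∈ W₀, l ∈ ker ∂_W, and any e ∈ E with σ(e) = x, one has H₁(B)([x,l]) = [ρ(e), H₁(B)(l)]. -/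
variable {K : Type*} [CommRing K]
variable {W₁ W₀ V₁ V₀ U₁ U₀ : Type*}
  [AddCommGroup W₁] [Module K W₁] [AddCommGroup W₀] [Module K W₀]
  [AddCommGroup V₁] [Module K V₁] [AddCommGroup V₀] [Module K V₀]
  [AddCommGroup U₁] [Module K U₁] [AddCommGroup U₀] [Module K U₀]

open LinearMap

namespace LinearMap

variable {R M N P : Type*} [Ring R] [AddCommGroup M] [Module R M] [AddCommGroup N] [Module R N]
  [AddCommGroup P] [Module R P]

noncomputable def liftOfSurjective (π : M →ₗ[R] N) (hπ : Function.Surjective π)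
    (f : M →ₗ[R] P) (h : ker π ≤ ker f) : N →ₗ[R] P :=
  (ker π).liftQ f h ∘ₗ (π.quotKerEquivOfSurjective hπ).symm.toLinearMap

theorem liftOfSurjective_apply (π : M →ₗ[R] N) (hπ : Function.Surjective π)
    (f : M →ₗ[R] P) (h : ker π ≤ ker f) (x : M) :
    liftOfSurjective π hπ f h (π x) = f x := by
  simp [liftOfSurjective]

noncomputable def liftOfInjective (ι : N →ₗ[R] P) (hι : Function.Injective ι)
    (f : M →ₗ[R] P) (h : range f ≤ range ι) : M →ₗ[R] N :=
  (LinearEquiv.ofInjective ι hι).symm.toLinearMap ∘ₗ f.codRestrict (range ι) (fun x ↦ h ⟨x, rfl⟩)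

theorem apply_liftOfInjective (ι : N →ₗ[R] P) (hι : Function.Injective ι)
    (f : M →ₗ[R] P) (h : range f ≤ range ι) (x : M) :
    ι (liftOfInjective ι hι f h x) = f x := by
  simp [liftOfInjective]

end LinearMap

namespace TwoTermL

variable (T : TwoTermL K V₁ V₀)

theorem br0_mem_range_of_right (x : V₀) {y : V₀} (hy : y ∈ range T.d) :
    T.br0 x y ∈ range T.d := by
  obtain ⟨h, rfl⟩ := hy
  exact ⟨T.br01 x h, T.d_br01 x h⟩

theorem br0_mem_range_of_left {x : V₀} (hx : x ∈ range T.d) (y : V₀) :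
    T.br0 x y ∈ range T.d := by
  rw [T.br0_antisymm]
  exact neg_mem (T.br0_mem_range_of_right y hx)

theorem br0_sub_br0_mem_range {x x' y y' : V₀} (hx : x - x' ∈ range T.d)
    (hy : y - y' ∈ range T.d) : T.br0 x y - T.br0 x' y' ∈ range T.d := by
  have split : T.br0 x y - T.br0 x' y' = T.br0 (x - x') y + T.br0 x' (y - y') := by
    simp only [map_sub, LinearMap.sub_apply]
    abel
  rw [split]
  exact add_mem (T.br0_mem_range_of_left hx y) (T.br0_mem_range_of_right x' hy)

end TwoTermL

namespace Butterfly

variable {TW : TwoTermL K W₁ W₀} {TV : TwoTermL K V₁ V₀} {E : Type*} [AddCommGroup E] [Module K E]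
  (B : Butterfly TW TV E)

theorem range_κ_ker_le_range_ι : range (B.κ ∘ₗ (ker TW.d).subtype) ≤ range B.ι := by
  rintro _ ⟨l, rfl⟩
  rw [← B.ker_σ_eq_range_ι, mem_ker]
  simp [B.σ_κ]

theorem d_liftOfInjective_κ (l : ker TW.d) :
    TV.d (liftOfInjective B.ι B.ι_inj _ B.range_κ_ker_le_range_ι l) = 0 := by
  rw [← B.ρ_ι, apply_liftOfInjective]
  exact B.ρ_κ l

noncomputable def H₁ : ker TW.d →ₗ[K] ker TV.d :=
  (liftOfInjective B.ι B.ι_inj _ B.range_κ_ker_le_range_ι).codRestrict _ B.d_liftOfInjective_κ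

theorem ι_H₁ (l : ker TW.d) : B.ι (B.H₁ l) = B.κ l :=
  apply_liftOfInjective B.ι B.ι_inj _ B.range_κ_ker_le_range_ι l

theorem eq_H₁_of_ι_eq (l : ker TW.d) (k : V₁) (hk : B.ι k = B.κ l) : k = B.H₁ l :=
  B.ι_inj (hk.trans (B.ι_H₁ l).symm)

theorem mkQ_σ_surjective : Function.Surjective ((range TW.d).mkQ ∘ₗ B.σ) :=
  (Submodule.mkQ_surjective _).comp B.σ_surj

theorem ker_mkQ_σ_le_ker_mkQ_ρ :
    ker ((range TW.d).mkQ ∘ₗ B.σ) ≤ ker ((range TV.d).mkQ ∘ₗ B.ρ) := by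
  intro e he
  obtain ⟨m, hm⟩ : B.σ e ∈ range TW.d := by simpa using he
  obtain ⟨k, hk⟩ : e - B.κ m ∈ range B.ι := by
    rw [← B.ker_σ_eq_range_ι, mem_ker, map_sub, B.σ_κ, hm, sub_self]
  have hρ : B.ρ e = TV.d k := by
    rw [← B.ρ_ι, hk, map_sub, B.ρ_κ, sub_zero]
  simp [hρ]

noncomputable def H₀ : (W₀ ⧸ range TW.d) →ₗ[K] (V₀ ⧸ range TV.d) :=
  liftOfSurjective _ B.mkQ_σ_surjective _ B.ker_mkQ_σ_le_ker_mkQ_ρ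

theorem H₀_mk_σ (e : E) :
    B.H₀ (Submodule.Quotient.mk (B.σ e)) = Submodule.Quotient.mk (B.ρ e) :=
  liftOfSurjective_apply _ B.mkQ_σ_surjective _ B.ker_mkQ_σ_le_ker_mkQ_ρ e

theorem H₀_mk_br0 (e e' : E) :
    B.H₀ (Submodule.Quotient.mk (TW.br0 (B.σ e) (B.σ e')))
      = Submodule.Quotient.mk (TV.br0 (B.ρ e) (B.ρ e')) := by
  rw [← B.σ_br, H₀_mk_σ, B.ρ_br]

theorem eq_br01_of_ι_eq_κ {l : W₁} {k k' : V₁} (e : E) (hk : B.ι k = B.κ l)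
    (hk' : B.ι k' = B.κ (TW.br01 (B.σ e) l)) : k' = TV.br01 (B.ρ e) k :=
  B.ι_inj (by rw [hk', ← B.br_κ, ← hk, B.br_ι])

end Butterfly

/-- A butterfly `B : 𝕎 → 𝕍` induces a `K`-linear map
`H₁(B) : ker ∂_W → ker ∂_V` (characterized by `ι(H₁(B)(l)) = κ(l)`, which
determines it uniquely) and a well-defined `K`-linear map
`H₀(B) : W₀/∂(W₁) → V₀/∂(V₁)` (sending the class of `σ(e)` to the class of
`ρ(e)`); the brackets descend to the quotients `W₀/∂(W₁)` and `V₀/∂(V₁)` and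
`H₀(B)` preserves them, and `H₁(B)` is equivariant over `H₀(B)`. -/
theorem butterfly_homology_maps
    {TW : TwoTermL K W₁ W₀} {TV : TwoTermL K V₁ V₀} {E : Type*}
    [AddCommGroup E] [Module K E] (B : Butterfly TW TV E) :
    ∃ (h1 : ↥(LinearMap.ker TW.d) →ₗ[K] ↥(LinearMap.ker TV.d))
      (h0 : (W₀ ⧸ LinearMap.range TW.d) →ₗ[K] (V₀ ⧸ LinearMap.range TV.d)),
      -- (i) characterization and uniqueness of H₁(B)
      (∀ l : LinearMap.ker TW.d, B.ι ((h1 l : V₁)) = B.κ (l : W₁)) ∧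
      (∀ (l : LinearMap.ker TW.d) (k : V₁),
        B.ι k = B.κ (l : W₁) → k = (h1 l : V₁)) ∧
      -- (ii) characterization (hence well-definedness) of H₀(B)
      (∀ e : E,
        h0 (Submodule.Quotient.mk (B.σ e)) = Submodule.Quotient.mk (B.ρ e)) ∧
      -- (iii) the brackets descend to the quotients ...
      (∀ x x' y y' : W₀, x - x' ∈ LinearMap.range TW.d →
        y - y' ∈ LinearMap.range TW.d →
          TW.br0 x y - TW.br0 x' y' ∈ LinearMap.range TW.d) ∧
      (∀ v v' w w' : V₀, v - v' ∈ LinearMap.range TV.d →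
        w - w' ∈ LinearMap.range TV.d →
          TV.br0 v w - TV.br0 v' w' ∈ LinearMap.range TV.d) ∧
      -- ... and H₀(B) preserves the descended brackets
      (∀ (x y : W₀) (e e' : E), B.σ e = x → B.σ e' = y →
        h0 (Submodule.Quotient.mk (TW.br0 x y))
          = Submodule.Quotient.mk (TV.br0 (B.ρ e) (B.ρ e'))) ∧
      -- (iv) H₁(B) is equivariant over H₀(B)
      (∀ (x : W₀) (l : W₁) (e : E), TW.d l = 0 → B.σ e = x →
        ∀ k k' : V₁, B.ι k = B.κ l → B.ι k' = B.κ (TW.br01 x l) →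
          k' = TV.br01 (B.ρ e) k) := by
  refine ⟨B.H₁, B.H₀, B.ι_H₁, B.eq_H₁_of_ι_eq, B.H₀_mk_σ,
    fun _ _ _ _ ↦ TW.br0_sub_br0_mem_range, fun _ _ _ _ ↦ TV.br0_sub_br0_mem_range, ?_, ?_⟩
  · rintro _ _ e e' rfl rfl
    exact B.H₀_mk_br0 e e'
  · rintro _ l e - rfl k k' hk hk'
    exact B.eq_br01_of_ι_eq_κ e hk hk'
end

section
/- Let B = (E, κ, ι, σ, ρ) : 𝕎 → 𝕍 be a butterfly between 2-term L∞-algebras over a commutative unital ring K. Then the 7-term sequence 0 → ker κ → ker ∂_W → ker ∂_V → (ker ρ)/κ(W₁) → W₀/∂(W₁) → V₀/∂(V₁) → V₀/ρ(E) → 0 is exact, where the maps are: the inclusion ker κ ⊆ ker ∂_W (valid since σ∘κ = ∂_W); H₁(B), sending l ∈ ker ∂_W to the unique k ∈ V₁ with ι(k) = κ(l); the map k ↦ (ι(k) mod κ(W₁)) (valid since ρ∘ι = ∂_V, so ι(ker ∂_V) ⊆ ker ρ, and ρ∘κ = 0, so κ(W₁) ⊆ ker ρ); the map (e mod κ(W₁))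 ↦ (σ(e) mod ∂(W₁)); the well-defined map H₀(B) sending (x mod ∂W₁) to (ρ(e) mod ∂V₁) for any e with σ(e) = x; and the canonical projection V₀/∂(V₁) → V₀/ρ(E) (valid since ∂(V₁) = ρ(ι(V₁)) ⊆ ρ(E)). -/
variable {K : Type*} [CommRing K]
variable {W₁ W₀ V₁ V₀ U₁ U₀ : Type*}
  [AddCommGroup W₁] [Module K W₁] [AddCommGroup W₀] [Module K W₀]
  [AddCommGroup V₁] [Module K V₁] [AddCommGroup V₀] [Module K V₀]
  [AddCommGroup U₁] [Module K U₁] [AddCommGroup U₀] [Module K U₀]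

namespace Butterfly

variable {TW : TwoTermL K W₁ W₀} {TV : TwoTermL K V₁ V₀} {E : Type*}
  [AddCommGroup E] [Module K E] (B : Butterfly TW TV E)

theorem exists_ι_eq_of_σ_eq_zero {a : E} (ha : B.σ a = 0) : ∃ k : V₁, B.ι k = a := by
  rw [← LinearMap.mem_range, ← B.ker_σ_eq_range_ι]
  exact ha

theorem d_eq_zero_of_κ_eq_zero {l : W₁} (hl : B.κ l = 0) : TW.d l = 0 := by
  rw [← B.σ_κ, hl, map_zero]

theorem d_eq_zero_of_ι_eq_κ {k : V₁} {l : W₁} (h : B.ι k = B.κ l) : TW.d l = 0 := by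
  rw [← B.σ_κ, ← h, B.σ_ι]

theorem d_eq_ρ_of_sub_ι_eq_κ {e : E} {k : V₁} {l : W₁} (h : e - B.ι k = B.κ l) :
    TV.d k = B.ρ e := by
  have hι : B.ι k = e - B.κ l := by rw [← h, sub_sub_cancel]
  rw [← B.ρ_ι, hι, map_sub, B.ρ_κ, sub_zero]

theorem σ_mem_range_d_iff (e : E) :
    B.σ e ∈ LinearMap.range TW.d ↔ ∃ (k : V₁) (l : W₁), e - B.ι k = B.κ l := by
  constructor
  · rintro ⟨l, hl⟩
    have hσ : B.σ (e - B.κ l) = 0 := by rw [map_sub, B.σ_κ, hl, sub_self]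
    obtain ⟨k, hk⟩ := B.exists_ι_eq_of_σ_eq_zero hσ
    exact ⟨k, l, by rw [hk, sub_sub_cancel]⟩
  · rintro ⟨k, l, h⟩
    refine ⟨l, ?_⟩
    rw [← B.σ_κ, ← h, map_sub, B.σ_ι, sub_zero]

theorem range_d_le_range_ρ : LinearMap.range TV.d ≤ LinearMap.range B.ρ := by
  rintro _ ⟨k, rfl⟩
  exact ⟨B.ι k, B.ρ_ι k⟩

theorem ρ_mem_range_d_iff (e : E) :
    B.ρ e ∈ LinearMap.range TV.d ↔
      ∃ e' : E, B.ρ e' = 0 ∧ B.σ e - B.σ e' ∈ LinearMap.range TW.d := by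
  constructor
  · rintro ⟨k, hk⟩
    refine ⟨e - B.ι k, by rw [map_sub, B.ρ_ι, hk, sub_self], ?_⟩
    rw [map_sub, B.σ_ι, sub_zero, sub_self]
    exact zero_mem _
  · rintro ⟨e', he', hσ⟩
    rw [← map_sub, B.σ_mem_range_d_iff] at hσ
    obtain ⟨k, l, h⟩ := hσ
    exact ⟨k, by rw [B.d_eq_ρ_of_sub_ι_eq_κ h, map_sub, he', sub_zero]⟩

theorem mem_range_ρ_iff (v : V₀) :
    v ∈ LinearMap.range B.ρ ↔ ∃ e : E, v - B.ρ e ∈ LinearMap.range TV.d := by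
  constructor
  · rintro ⟨e, rfl⟩
    exact ⟨e, by rw [sub_self]; exact zero_mem _⟩
  · rintro ⟨e, he⟩
    rw [← sub_add_cancel v (B.ρ e)]
    exact add_mem (B.range_d_le_range_ρ he) (LinearMap.mem_range_self _ _)

end Butterfly

/-- The 7-term long exact sequence of a butterfly `B : 𝕎 → 𝕍`:
`0 → ker κ → ker ∂_W → ker ∂_V → (ker ρ)/κ(W₁) → W₀/∂(W₁) → V₀/∂(V₁) → V₀/ρ(E) → 0`,
stated elementwise at each spot. -/
theorem butterfly_seven_term_exact
    {TW : TwoTermL K W₁ W₀} {TV : TwoTermL K V₁ V₀} {E : Type*}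
    [AddCommGroup E] [Module K E] (B : Butterfly TW TV E) :
    -- the inclusion `ker κ ⊆ ker ∂_W` is valid
    (∀ l : W₁, B.κ l = 0 → TW.d l = 0) ∧
    -- exactness at `ker ∂_W`: `H₁(B)(l) = 0` iff `l ∈ ker κ`
    (∀ l : W₁, TW.d l = 0 → ∀ k : V₁, B.ι k = B.κ l → (k = 0 ↔ B.κ l = 0)) ∧
    -- exactness at `ker ∂_V`: `ι(k) ∈ κ(W₁)` iff `k` is in the image of `H₁(B)`
    (∀ k : V₁, TV.d k = 0 →
      ((∃ l : W₁, B.ι k = B.κ l) ↔ ∃ l : W₁, TW.d l = 0 ∧ B.ι k = B.κ l)) ∧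
    -- exactness at `(ker ρ)/κ(W₁)`
    (∀ e : E, B.ρ e = 0 →
      ((B.σ e ∈ LinearMap.range TW.d) ↔
        ∃ k : V₁, TV.d k = 0 ∧ ∃ l : W₁, e - B.ι k = B.κ l)) ∧
    -- exactness at `W₀/∂(W₁)`: `H₀(B)(x mod ∂W₁) = 0` iff the class of `x`
    -- comes from `(ker ρ)/κ(W₁)`
    (∀ (x : W₀) (e : E), B.σ e = x →
      ((B.ρ e ∈ LinearMap.range TV.d) ↔
        ∃ e' : E, B.ρ e' = 0 ∧ x - B.σ e' ∈ LinearMap.range TW.d)) ∧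
    -- exactness at `V₀/∂(V₁)`: the class of `v` dies in `V₀/ρ(E)` iff it is
    -- in the image of `H₀(B)`
    (∀ v : V₀, (v ∈ LinearMap.range B.ρ) ↔
      ∃ e : E, v - B.ρ e ∈ LinearMap.range TV.d) ∧
    -- surjectivity onto `V₀/ρ(E)`
    (∀ c : V₀ ⧸ LinearMap.range B.ρ, ∃ v : V₀, Submodule.Quotient.mk v = c) := by
  refine ⟨fun _ => B.d_eq_zero_of_κ_eq_zero, ?_, ?_, ?_, ?_, B.mem_range_ρ_iff,
    Submodule.Quotient.mk_surjective _⟩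
  · rintro l - k hk
    rw [← hk, map_eq_zero_iff B.ι B.ι_inj]
  · exact fun k _ =>
      ⟨fun ⟨l, hl⟩ => ⟨l, B.d_eq_zero_of_ι_eq_κ hl, hl⟩, fun ⟨l, _, hl⟩ => ⟨l, hl⟩⟩
  · intro e he
    rw [B.σ_mem_range_d_iff]
    exact ⟨fun ⟨k, l, h⟩ => ⟨k, (B.d_eq_ρ_of_sub_ι_eq_κ h).trans he, l, h⟩,
      fun ⟨k, _, l, h⟩ => ⟨k, l, h⟩⟩
  · rintro x e rfl
    exact B.ρ_mem_range_d_iff e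
end

section
/- Let X, Y, Z, W be groups, h : X → Y, k : X → Z, f : Y → W, g : Z → W homomorphisms with g∘k = f∘h and f surjective, and let W act on X by group automorphisms so that f(h(w·x)) = w·f(h(x))·w⁻¹ and (f(h(x)))·x' = x·x'·x⁻¹ for all w ∈ W, x, x' ∈ X, and such that h(f(y)·x) = y·h(x)·y⁻¹ for all y ∈ Y, x ∈ X, and k(g(z)·x) = z·k(x)·z⁻¹ for all z ∈ Z, x ∈ X. Then the image N := {(k(x), h(x)) : x ∈ X} is a normal subgroup of the fiber product Z×_W Y := {(z,y) : g(z) = f(y)}, and one sets Z×^X_W Y := (Z×_W Y)/N. -/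
/-!
Conjugating `(k x, h x)` by a point `(z, y)` of the fiber product gives
`(z * k x * z⁻¹, y * h x * y⁻¹) = (k (g z • x), h (f y • x))`, and since `g z = f y` both
coordinates come from the same element `g z • x` of `X`.
-/

namespace MonoidHom

variable {Y Z W : Type*} [Group Y] [Group Z] [Group W]

def fiberProduct (g : Z →* W) (f : Y →* W) : Subgroup (Z × Y) :=
  (g.comp (fst Z Y)).eqLocus (f.comp (snd Z Y))

@[simp]
theorem mem_fiberProduct {g : Z →* W} {f : Y →* W} {p : Z × Y} :
    p ∈ fiberProduct g f ↔ g p.1 = f p.2 :=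
  Iff.rfl

variable {X : Type*} [Group X]

theorem range_prod_le_fiberProduct {h : X →* Y} {k : X →* Z} {f : Y →* W} {g : Z →* W}
    (hcomm : ∀ x : X, g (k x) = f (h x)) : (k.prod h).range ≤ fiberProduct g f := by
  rintro _ ⟨x, rfl⟩
  exact hcomm x

theorem conj_prod_eq_prod_smul [SMul W X] {h : X →* Y} {k : X →* Z} {f : Y →* W}
    {g : Z →* W} (hYequiv : ∀ (y : Y) (x : X), h (f y • x) = y * h x * y⁻¹)
    (hZequiv : ∀ (z : Z) (x : X), k (g z • x) = z * k x * z⁻¹) {p : Z × Y}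
    (hp : p ∈ fiberProduct g f) (x : X) :
    p * k.prod h x * p⁻¹ = k.prod h (g p.1 • x) := by
  ext
  · simp [hZequiv]
  · simp [mem_fiberProduct.mp hp, hYequiv]

theorem conj_mem_range_prod [SMul W X] {h : X →* Y} {k : X →* Z} {f : Y →* W}
    {g : Z →* W} (hYequiv : ∀ (y : Y) (x : X), h (f y • x) = y * h x * y⁻¹)
    (hZequiv : ∀ (z : Z) (x : X), k (g z • x) = z * k x * z⁻¹) {p : Z × Y}
    (hp : p ∈ fiberProduct g f) {n : Z × Y} (hn : n ∈ (k.prod h).range) :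
    p * n * p⁻¹ ∈ (k.prod h).range := by
  obtain ⟨x, rfl⟩ := hn
  exact ⟨g p.1 • x, (conj_prod_eq_prod_smul hYequiv hZequiv hp x).symm⟩

end MonoidHom

theorem antidiagonal_normal_in_fiber_product_general
    {X Y Z W : Type*} [Group X] [Group Y] [Group Z] [Group W]
    [MulDistribMulAction W X]
    (h : X →* Y) (k : X →* Z) (f : Y →* W) (g : Z →* W)
    (hcomm : ∀ x : X, g (k x) = f (h x))
    (hYequiv : ∀ (y : Y) (x : X), h (f y • x) = y * h x * y⁻¹)
    (hZequiv : ∀ (z : Z) (x : X), k (g z • x) = z * k x * z⁻¹) :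
    ∃ FP N : Subgroup (Z × Y),
      (∀ p : Z × Y, p ∈ FP ↔ g p.1 = f p.2) ∧
      (∀ p : Z × Y, p ∈ N ↔ ∃ x : X, p = (k x, h x)) ∧
      N ≤ FP ∧
      (∀ p ∈ FP, ∀ n ∈ N, p * n * p⁻¹ ∈ N) :=
  ⟨MonoidHom.fiberProduct g f, (k.prod h).range, fun _ => MonoidHom.mem_fiberProduct,
    fun _ => ⟨fun ⟨x, hx⟩ => ⟨x, hx.symm⟩, fun ⟨x, hx⟩ => ⟨x, hx.symm⟩⟩,
    MonoidHom.range_prod_le_fiberProduct hcomm,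
    fun _ hp _ hn => MonoidHom.conj_mem_range_prod hYequiv hZequiv hp hn⟩

/-- Let `X, Y, Z, W` be groups, `h : X → Y`, `k : X → Z`, `f : Y → W`,
`g : Z → W` homomorphisms with `g∘k = f∘h` and `f` surjective. Let `W` act on
`X` by automorphisms so that `f∘h : X → W` is a crossed-module (equivariance
and Peiffer identity), `h` is `Y`-equivariant and `k` is `Z`-equivariant.
Then the image `N = {(k(x), h(x)) : x ∈ X}` is a normal subgroup of the fiber
product `Z ×_W Y = {(z,y) : g(z) = f(y)}`. -/
theorem antidiagonal_normal_in_fiber_product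
    {X Y Z W : Type*} [Group X] [Group Y] [Group Z] [Group W]
    [MulDistribMulAction W X]
    (h : X →* Y) (k : X →* Z) (f : Y →* W) (g : Z →* W)
    (hcomm : ∀ x : X, g (k x) = f (h x))
    (hfsurj : Function.Surjective f)
    (hequiv : ∀ (w : W) (x : X), f (h (w • x)) = w * f (h x) * w⁻¹)
    (hpeiffer : ∀ x x' : X, (f (h x)) • x' = x * x' * x⁻¹)
    (hYequiv : ∀ (y : Y) (x : X), h (f y • x) = y * h x * y⁻¹)
    (hZequiv : ∀ (z : Z) (x : X), k (g z • x) = z * k x * z⁻¹) :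
    ∃ FP N : Subgroup (Z × Y),
      (∀ p : Z × Y, p ∈ FP ↔ g p.1 = f p.2) ∧
      (∀ p : Z × Y, p ∈ N ↔ ∃ x : X, p = (k x, h x)) ∧
      N ≤ FP ∧
      (∀ p ∈ FP, ∀ n ∈ N, p * n * p⁻¹ ∈ N) :=
  antidiagonal_normal_in_fiber_product_general h k f g hcomm hYequiv hZequiv
end

section
/- Let X, Y, Z, W be groups, h : X → Y, k : X → Z, f : Y → W, g : Z → W homomorphisms with g∘k = f∘h and f surjective, and let W act on X by automorphisms so that [f∘h : X → W] is a crossed-module, h is Y-equivariant (h(f(y)·x) = y·h(x)·y⁻¹) and k is Z-equivariant (k(g(z)·x) = z·k(x)·z⁻¹); set Z×^X_W Y := (Z×_W Y)/N where N = {(k(x),h(x)) : x ∈ X}. Let α : W' → W be a homomorphism whose image is normal in W, let W₀ := W/α(W') with quotient map π, and form the pullbacks Y' := {(y,v) ∈ Y×W' : f(y) = α(v)}, Z' := {(z,v) ∈ Z×W' : g(z) = α(v)}, X' := {(x,v) ∈ X×W' : f(h(x)) = α(v)}, with the component-wise maps h'(x,v) = (h(x),v), k'(x,v) = (k(x),v),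 f'(y,v) = v, g'(z,v) = v. Then: (i) N' := {((k(x),v),(h(x),v)) : (x,v) ∈ X'} is a normal subgroup of Z'×_{W'}Y' := {((z,v),(y,v)) : v ∈ W', g(z) = α(v) = f(y)}, so Z'×^{X'}_{W'}Y' := (Z'×_{W'}Y')/N' is defined; (ii) writing X₀ := π(f(h(X))) and Z₀ := π(g(Z)), X₀ is a normal subgroup of W₀ contained in Z₀; and (iii) the sequence 1 → Z'×^{X'}_{W'}Y' → Z×^X_W Y → Z₀/X₀ → 1 is exact, where the first map is induced by ((z,v),(y,v)) ↦ (z,y) and the second sends the class of (z,y) to the coset π(g(z))·X₀. -/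
/-!
Everything is checked on representatives. Conjugating `(k x, h x)` by `(z, y) ∈ Z ×_W Y`
gives `(k (g z • x), h (g z • x))` by the two equivariance conditions, which makes `N`, and
likewise `N'`, normal. An element `(z, y)` of `Z ×_W Y` lifts to `Z' ×_{W'} Y'` exactly when
`g z ∈ α(W')`, so modulo `N` it lies in the image of the first map exactly when `g z` agrees
with some `f (h x)` modulo the normal subgroup `α(W')`, i.e. when `π (g z) ∈ X₀`. Surjectivity
of `f` lifts every `π (g z)` to `(z, y) ∈ Z ×_W Y`.
-/

open QuotientGroup

section FiberProduct

variable {X Y Z W W' : Type*} [Group X] [Group Y] [Group Z] [Group W] [Group W']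

def fiberProd (g : Z →* W) (f : Y →* W) : Subgroup (Z × Y) :=
  (g.comp (MonoidHom.fst Z Y)).eqLocus (f.comp (MonoidHom.snd Z Y))

/-- The fiber product `Z' ×_{W'} Y'` of the pullbacks `Z' = Z ×_W W'` and `Y' = Y ×_W W'`,
inside `(Z × W') × (Y × W')`. -/
def pullbackFiberProd (g : Z →* W) (f : Y →* W) (α : W' →* W) :
    Subgroup ((Z × W') × (Y × W')) :=
  fiberProd (MonoidHom.snd Z W') (MonoidHom.snd Y W') ⊓ (fiberProd g α).prod (fiberProd f α)

/-- The image `N'` of `X' = X ×_W W'` under `(x, v) ↦ ((k x, v), (h x, v))`. -/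
def pullbackRangeProd (h : X →* Y) (k : X →* Z) (f : Y →* W) (α : W' →* W) :
    Subgroup ((Z × W') × (Y × W')) :=
  (fiberProd (f.comp h) α).map ((k.prodMap (MonoidHom.id W')).prod (h.prodMap (MonoidHom.id W')))

def pullbackProj : (Z × W') × (Y × W') →* Z × Y :=
  (MonoidHom.fst Z W').prodMap (MonoidHom.fst Y W')

@[simp]
theorem pullbackProj_apply (q : (Z × W') × (Y × W')) : pullbackProj q = (q.1.1, q.2.1) := rfl

variable {h : X →* Y} {k : X →* Z} {f : Y →* W} {g : Z →* W} {α : W' →* W}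

theorem mem_fiberProd {p : Z × Y} : p ∈ fiberProd g f ↔ g p.1 = f p.2 := Iff.rfl

theorem mem_pullbackFiberProd {q : (Z × W') × (Y × W')} :
    q ∈ pullbackFiberProd g f α ↔
      q.1.2 = q.2.2 ∧ g q.1.1 = α q.1.2 ∧ f q.2.1 = α q.2.2 :=
  Iff.rfl

theorem mem_pullbackRangeProd {q : (Z × W') × (Y × W')} :
    q ∈ pullbackRangeProd h k f α ↔
      ∃ (x : X) (v : W'), f (h x) = α v ∧ q = ((k x, v), (h x, v)) := by
  constructor
  · rintro ⟨⟨x, v⟩, hxv, rfl⟩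
    exact ⟨x, v, hxv, rfl⟩
  · rintro ⟨x, v, hxv, rfl⟩
    exact ⟨(x, v), hxv, rfl⟩

theorem range_prod_le_fiberProd (hcomm : ∀ x, g (k x) = f (h x)) :
    (k.prod h).range ≤ fiberProd g f := by
  rintro _ ⟨x, rfl⟩
  exact hcomm x

theorem prod_smul_eq_conj [MulDistribMulAction W X]
    (hYequiv : ∀ (y : Y) (x : X), h (f y • x) = y * h x * y⁻¹)
    (hZequiv : ∀ (z : Z) (x : X), k (g z • x) = z * k x * z⁻¹)
    {p : Z × Y} (hp : p ∈ fiberProd g f) (x : X) :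
    k.prod h (g p.1 • x) = p * k.prod h x * p⁻¹ := by
  ext
  · exact hZequiv p.1 x
  · rw [MonoidHom.prod_apply, mem_fiberProd.1 hp]
    exact hYequiv p.2 x

theorem conj_mem_range_prod [MulDistribMulAction W X]
    (hYequiv : ∀ (y : Y) (x : X), h (f y • x) = y * h x * y⁻¹)
    (hZequiv : ∀ (z : Z) (x : X), k (g z • x) = z * k x * z⁻¹)
    {p n : Z × Y} (hp : p ∈ fiberProd g f) (hn : n ∈ (k.prod h).range) :
    p * n * p⁻¹ ∈ (k.prod h).range := by
  obtain ⟨x, rfl⟩ := hn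
  exact ⟨g p.1 • x, prod_smul_eq_conj hYequiv hZequiv hp x⟩

theorem normal_range_of_smul_eq_conj [MulDistribMulAction W X] {φ : X →* W}
    (hequiv : ∀ (w : W) (x : X), φ (w • x) = w * φ x * w⁻¹) :
    φ.range.Normal :=
  ⟨by rintro _ ⟨x, rfl⟩ w; exact ⟨w • x, hequiv w x⟩⟩

theorem pullbackProj_mem_fiberProd {q : (Z × W') × (Y × W')}
    (hq : q ∈ pullbackFiberProd g f α) :
    pullbackProj q ∈ fiberProd g f := by
  obtain ⟨hv, hz, hy⟩ := mem_pullbackFiberProd.1 hq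
  exact mem_fiberProd.2 (hz.trans (hv ▸ hy.symm))

theorem pullbackRangeProd_le (hcomm : ∀ x, g (k x) = f (h x)) :
    pullbackRangeProd h k f α ≤ pullbackFiberProd g f α := by
  rintro _ ⟨⟨x, v⟩, hxv, rfl⟩
  exact ⟨rfl, (hcomm x).trans hxv, hxv⟩

theorem conj_mem_pullbackRangeProd [MulDistribMulAction W X]
    (hYequiv : ∀ (y : Y) (x : X), h (f y • x) = y * h x * y⁻¹)
    (hZequiv : ∀ (z : Z) (x : X), k (g z • x) = z * k x * z⁻¹)
    {q n : (Z × W') × (Y × W')} (hq : q ∈ pullbackFiberProd g f α)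
    (hn : n ∈ pullbackRangeProd h k f α) :
    q * n * q⁻¹ ∈ pullbackRangeProd h k f α := by
  obtain ⟨hv, hz, hy⟩ := mem_pullbackFiberProd.1 hq
  obtain ⟨x, v, hxv, rfl⟩ := mem_pullbackRangeProd.1 hn
  have hk : k (g q.1.1 • x) = q.1.1 * k x * q.1.1⁻¹ := hZequiv _ _
  have hh : h (g q.1.1 • x) = q.2.1 * h x * q.2.1⁻¹ := by
    rw [hz, hv, ← hy]
    exact hYequiv _ _
  refine mem_pullbackRangeProd.2 ⟨g q.1.1 • x, q.1.2 * v * q.1.2⁻¹, ?_, ?_⟩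
  · simp [hh, hy, hv, hxv]
  · ext <;> simp [hk, hh, hv]

theorem mem_pullbackRangeProd_of_pullbackProj_mem {q : (Z × W') × (Y × W')}
    (hq : q ∈ pullbackFiberProd g f α) (hN : pullbackProj q ∈ (k.prod h).range) :
    q ∈ pullbackRangeProd h k f α := by
  obtain ⟨hv, -, hy⟩ := mem_pullbackFiberProd.1 hq
  obtain ⟨x, hx⟩ := hN
  have hkx : k x = q.1.1 := congrArg Prod.fst hx
  have hhx : h x = q.2.1 := congrArg Prod.snd hx
  refine mem_pullbackRangeProd.2 ⟨x, q.2.2, hhx ▸ hy, ?_⟩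
  ext <;> simp [hkx, hhx, hv]

theorem exists_pullbackProj_eq {p : Z × Y} (hp : p ∈ fiberProd g f) (hg : g p.1 ∈ α.range) :
    ∃ q ∈ pullbackFiberProd g f α, pullbackProj q = p := by
  obtain ⟨v, hv⟩ := hg
  exact ⟨((p.1, v), (p.2, v)), ⟨rfl, hv.symm, (mem_fiberProd.1 hp ▸ hv).symm⟩, rfl⟩

theorem mk_mem_range_iff_exists_pullback [α.range.Normal] (hcomm : ∀ x, g (k x) = f (h x))
    {p : Z × Y} (hp : p ∈ fiberProd g f) :
    mk' α.range (g p.1) ∈ ((mk' α.range).comp (f.comp h)).range ↔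
      ∃ q ∈ pullbackFiberProd g f α, p⁻¹ * pullbackProj q ∈ (k.prod h).range := by
  constructor
  · rintro ⟨x, hx⟩
    have hg : g p.1 * (f (h x))⁻¹ ∈ α.range :=
      ‹α.range.Normal›.mem_comm (QuotientGroup.eq.1 hx)
    have hmem : p * (k.prod h x)⁻¹ ∈ fiberProd g f :=
      mul_mem hp (inv_mem (range_prod_le_fiberProd hcomm ⟨x, rfl⟩))
    obtain ⟨q, hq, hqp⟩ := exists_pullbackProj_eq hmem (by simpa [hcomm] using hg)
    exact ⟨q, hq, x⁻¹, by simp [hqp]⟩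
  · rintro ⟨q, hq, x, hx⟩
    obtain ⟨-, hz, -⟩ := mem_pullbackFiberProd.1 hq
    have hpq : p = pullbackProj q * (k.prod h x)⁻¹ := by
      rw [hx, mul_inv_rev, inv_inv, mul_inv_cancel_left]
    have hgp : g p.1 = α q.1.2 * f (h x⁻¹) := by
      rw [hpq]
      simp [hz, hcomm]
    refine ⟨x⁻¹, ?_⟩
    simp [hgp, (QuotientGroup.eq_one_iff _).2 (MonoidHom.mem_range.2 ⟨q.1.2, rfl⟩)]

end FiberProduct

theorem pullback_quotient_exact_sequence_general
    {X Y Z W W' : Type*} [Group X] [Group Y] [Group Z] [Group W] [Group W']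
    [MulDistribMulAction W X]
    (h : X →* Y) (k : X →* Z) (f : Y →* W) (g : Z →* W)
    (hcomm : ∀ x : X, g (k x) = f (h x))
    (hfsurj : Function.Surjective f)
    (hequiv : ∀ (w : W) (x : X), f (h (w • x)) = w * f (h x) * w⁻¹)
    (hYequiv : ∀ (y : Y) (x : X), h (f y • x) = y * h x * y⁻¹)
    (hZequiv : ∀ (z : Z) (x : X), k (g z • x) = z * k x * z⁻¹)
    (α : W' →* W) [hα : α.range.Normal] :
    ∃ (FP N : Subgroup (Z × Y))
      (FP' N' : Subgroup ((Z × W') × (Y × W')))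
      (X₀ Z₀ : Subgroup (W ⧸ α.range)),
      -- identification of the six subgroups
      (∀ p : Z × Y, p ∈ FP ↔ g p.1 = f p.2) ∧
      (∀ p : Z × Y, p ∈ N ↔ ∃ x : X, p = (k x, h x)) ∧
      (∀ q : (Z × W') × (Y × W'), q ∈ FP' ↔
        q.1.2 = q.2.2 ∧ g q.1.1 = α q.1.2 ∧ f q.2.1 = α q.2.2) ∧
      (∀ q : (Z × W') × (Y × W'), q ∈ N' ↔
        ∃ (x : X) (v : W'), f (h x) = α v ∧ q = ((k x, v), (h x, v))) ∧
      (∀ w₀ : W ⧸ α.range, w₀ ∈ X₀ ↔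
        ∃ x : X, w₀ = QuotientGroup.mk' α.range (f (h x))) ∧
      (∀ w₀ : W ⧸ α.range, w₀ ∈ Z₀ ↔
        ∃ z : Z, w₀ = QuotientGroup.mk' α.range (g z)) ∧
      -- `N` is normal in `FP` and `N'` is normal in `FP'`, so the quotients
      -- `Z×^X_W Y` and `Z'×^{X'}_{W'}Y'` are defined
      N ≤ FP ∧ (∀ p ∈ FP, ∀ n ∈ N, p * n * p⁻¹ ∈ N) ∧
      N' ≤ FP' ∧ (∀ q ∈ FP', ∀ n ∈ N', q * n * q⁻¹ ∈ N') ∧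
      -- (ii) `X₀` is a normal subgroup of `W₀` contained in `Z₀`
      X₀.Normal ∧ X₀ ≤ Z₀ ∧
      -- (iii) exactness of `1 → Z'×^{X'}_{W'}Y' → Z×^X_W Y → Z₀/X₀ → 1`:
      -- the first map is well defined ...
      (∀ q ∈ FP', ((q.1.1, q.2.1) : Z × Y) ∈ FP) ∧
      -- ... and injective on `N'`-cosets
      (∀ q ∈ FP', ∀ q' ∈ FP',
        ((q.1.1, q.2.1) : Z × Y)⁻¹ * (q'.1.1, q'.2.1) ∈ N → q⁻¹ * q' ∈ N') ∧
      -- the second map is well defined on `N`-cosets ...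
      (∀ n ∈ N, QuotientGroup.mk' α.range (g n.1) ∈ X₀) ∧
      -- ... its "kernel" is exactly the image of the first map
      (∀ p ∈ FP, (QuotientGroup.mk' α.range (g p.1) ∈ X₀ ↔
        ∃ q ∈ FP', p⁻¹ * ((q.1.1, q.2.1) : Z × Y) ∈ N)) ∧
      -- ... and it is surjective onto `Z₀/X₀`
      (∀ w₀ ∈ Z₀, ∃ p ∈ FP, (QuotientGroup.mk' α.range (g p.1))⁻¹ * w₀ ∈ X₀) := by
  refine ⟨fiberProd g f, (k.prod h).range, pullbackFiberProd g f α, pullbackRangeProd h k f α,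
    ((mk' α.range).comp (f.comp h)).range, ((mk' α.range).comp g).range,
    fun _ => Iff.rfl, fun _ => MonoidHom.mem_range.trans (exists_congr fun _ => eq_comm),
    fun _ => mem_pullbackFiberProd, fun _ => mem_pullbackRangeProd,
    fun _ => MonoidHom.mem_range.trans (exists_congr fun _ => eq_comm),
    fun _ => MonoidHom.mem_range.trans (exists_congr fun _ => eq_comm),
    range_prod_le_fiberProd hcomm,
    fun _ hp _ hn => conj_mem_range_prod hYequiv hZequiv hp hn,
    pullbackRangeProd_le hcomm,
    fun _ hq _ hn => conj_mem_pullbackRangeProd hYequiv hZequiv hq hn,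
    ?_, ?_, fun _ hq => pullbackProj_mem_fiberProd hq,
    fun _ hq _ hq' hn => mem_pullbackRangeProd_of_pullbackProj_mem (mul_mem (inv_mem hq) hq') hn,
    ?_, fun _ hp => mk_mem_range_iff_exists_pullback hcomm hp, ?_⟩
  · rw [MonoidHom.range_comp]
    exact (normal_range_of_smul_eq_conj hequiv).map _ (mk'_surjective _)
  · rintro _ ⟨x, rfl⟩
    exact ⟨k x, by simp [hcomm x]⟩
  · rintro _ ⟨x, rfl⟩
    exact ⟨x, by simp [hcomm x]⟩
  · rintro _ ⟨z, rfl⟩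
    obtain ⟨y, hy⟩ := hfsurj (g z)
    exact ⟨(z, y), hy.symm, 1, by simp⟩

/-- Pulling back the data `(X, Y, Z, W, h, k, f, g)` of a crossed-module-type
square along a homomorphism `α : W' → W` with normal image, let
`W₀ := W/α(W')`, `X₀ := π(f(h(X)))`, `Z₀ := π(g(Z))`, let
`FP = Z ×_W Y`, `N = {(k x, h x)}`, and let `FP'`, `N'` be the corresponding
subgroups for the pulled-back data `(X', Y', Z', W')`. Then `N'` is normal in
`FP'` (so `Z'×^{X'}_{W'}Y'` is defined), `X₀` is a normal subgroup of `W₀`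
contained in `Z₀`, and the sequence
`1 → Z'×^{X'}_{W'}Y' → Z×^X_W Y → Z₀/X₀ → 1` is exact, where the first map is
induced by `((z,v),(y,v)) ↦ (z,y)` and the second sends the class of `(z,y)`
to the coset `π(g(z))·X₀` (everything stated elementwise on the level of
coset representatives). -/
theorem pullback_quotient_exact_sequence
    {X Y Z W W' : Type*} [Group X] [Group Y] [Group Z] [Group W] [Group W']
    [MulDistribMulAction W X]
    (h : X →* Y) (k : X →* Z) (f : Y →* W) (g : Z →* W)
    (hcomm : ∀ x : X, g (k x) = f (h x))
    (hfsurj : Function.Surjective f)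
    (hequiv : ∀ (w : W) (x : X), f (h (w • x)) = w * f (h x) * w⁻¹)
    (hpeiffer : ∀ x x' : X, (f (h x)) • x' = x * x' * x⁻¹)
    (hYequiv : ∀ (y : Y) (x : X), h (f y • x) = y * h x * y⁻¹)
    (hZequiv : ∀ (z : Z) (x : X), k (g z • x) = z * k x * z⁻¹)
    (α : W' →* W) [hα : α.range.Normal] :
    ∃ (FP N : Subgroup (Z × Y))
      (FP' N' : Subgroup ((Z × W') × (Y × W')))
      (X₀ Z₀ : Subgroup (W ⧸ α.range)),
      -- identification of the six subgroups
      (∀ p : Z × Y, p ∈ FP ↔ g p.1 = f p.2) ∧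
      (∀ p : Z × Y, p ∈ N ↔ ∃ x : X, p = (k x, h x)) ∧
      (∀ q : (Z × W') × (Y × W'), q ∈ FP' ↔
        q.1.2 = q.2.2 ∧ g q.1.1 = α q.1.2 ∧ f q.2.1 = α q.2.2) ∧
      (∀ q : (Z × W') × (Y × W'), q ∈ N' ↔
        ∃ (x : X) (v : W'), f (h x) = α v ∧ q = ((k x, v), (h x, v))) ∧
      (∀ w₀ : W ⧸ α.range, w₀ ∈ X₀ ↔
        ∃ x : X, w₀ = QuotientGroup.mk' α.range (f (h x))) ∧
      (∀ w₀ : W ⧸ α.range, w₀ ∈ Z₀ ↔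
        ∃ z : Z, w₀ = QuotientGroup.mk' α.range (g z)) ∧
      -- `N` is normal in `FP` and `N'` is normal in `FP'`, so the quotients
      -- `Z×^X_W Y` and `Z'×^{X'}_{W'}Y'` are defined
      N ≤ FP ∧ (∀ p ∈ FP, ∀ n ∈ N, p * n * p⁻¹ ∈ N) ∧
      N' ≤ FP' ∧ (∀ q ∈ FP', ∀ n ∈ N', q * n * q⁻¹ ∈ N') ∧
      -- (ii) `X₀` is a normal subgroup of `W₀` contained in `Z₀`
      X₀.Normal ∧ X₀ ≤ Z₀ ∧
      -- (iii) exactness of `1 → Z'×^{X'}_{W'}Y' → Z×^X_W Y → Z₀/X₀ → 1`: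
      -- the first map is well defined ...
      (∀ q ∈ FP', ((q.1.1, q.2.1) : Z × Y) ∈ FP) ∧
      -- ... and injective on `N'`-cosets
      (∀ q ∈ FP', ∀ q' ∈ FP',
        ((q.1.1, q.2.1) : Z × Y)⁻¹ * (q'.1.1, q'.2.1) ∈ N → q⁻¹ * q' ∈ N') ∧
      -- the second map is well defined on `N`-cosets ...
      (∀ n ∈ N, QuotientGroup.mk' α.range (g n.1) ∈ X₀) ∧
      -- ... its "kernel" is exactly the image of the first map
      (∀ p ∈ FP, (QuotientGroup.mk' α.range (g p.1) ∈ X₀ ↔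
        ∃ q ∈ FP', p⁻¹ * ((q.1.1, q.2.1) : Z × Y) ∈ N)) ∧
      -- ... and it is surjective onto `Z₀/X₀`
      (∀ w₀ ∈ Z₀, ∃ p ∈ FP, (QuotientGroup.mk' α.range (g p.1))⁻¹ * w₀ ∈ X₀) :=
  pullback_quotient_exact_sequence_general h k f g hcomm hfsurj hequiv hYequiv hZequiv α (hα := hα)
end
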